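/- If (U, R, 𝓕) is an L-approximation space, then (𝔠(U, R, 𝓕), ⊆) is an L-domain. -/

import Mathlib

open Set

/-- The upper approximation operator: `upp R A = {x | ∃ y ∈ A, x R y}`. -/
def upp {U : Type*} (R : U → U → Prop) (A : Set U) : Set U := {x | ∃ y ∈ A, R x y}

/-- `(U, R, 𝓕)` is a CF-approximation space. -/
def IsCFApprox {U : Type*} (R : U → U → Prop) (𝓕 : Set (Set U)) : Prop :=
  Transitive R ∧ 𝓕.Nonempty ∧ (∀ F ∈ 𝓕, F.Finite) ∧
    ∀ F ∈ 𝓕, ∀ K : Set U, K.Finite → K ⊆ upp R F →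
      ∃ G ∈ 𝓕, K ⊆ upp R G ∧ G ⊆ upp R F

/-- `E` is a CF-closed set of `(U, R, 𝓕)`. -/
def CFClosed {U : Type*} (R : U → U → Prop) (𝓕 : Set (Set U)) (E : Set U) : Prop :=
  ∀ K : Set U, K.Finite → K ⊆ E →
    ∃ F ∈ 𝓕, K ⊆ upp R F ∧ upp R F ⊆ E ∧ F ⊆ E

/-- The join saturation `𝓕^♯`: all unions of nonempty finite subfamilies of `𝓕`. -/
def joinSat {U : Type*} (𝓕 : Set (Set U)) : Set (Set U) :=
  {A | ∃ 𝓐 : Set (Set U), 𝓐 ⊆ 𝓕 ∧ 𝓐.Finite ∧ 𝓐.Nonempty ∧ A = ⋃₀ 𝓐}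

/-- `S(M, F)`: the set of `G ∈ 𝓕` satisfying (sL-1) and (sL-2). -/
def SFam {U : Type*} (R : U → U → Prop) (𝓕 : Set (Set U)) (M F : Set U) : Set (Set U) :=
  {G | G ∈ 𝓕 ∧ upp R M ⊆ upp R G ∧ upp R G ⊆ upp R F ∧
    ∀ G' ∈ 𝓕, upp R M ⊆ upp R G' → upp R G' ⊆ upp R F → upp R G ⊆ upp R G'}

/-- `S*(M, F) = {G ∈ S(M, F) | G ⊆ upp R F}`. -/
def SStar {U : Type*} (R : U → U → Prop) (𝓕 : Set (Set U)) (M F : Set U) : Set (Set U) :=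
  {G | G ∈ SFam R 𝓕 M F ∧ G ⊆ upp R F}

/-- sL-approximation space. -/
def IsSLApprox {U : Type*} (R : U → U → Prop) (𝓕 : Set (Set U)) : Prop :=
  IsCFApprox R 𝓕 ∧
    ∀ M ∈ joinSat 𝓕, ∀ F ∈ 𝓕, M ⊆ upp R F → (SFam R 𝓕 M F).Nonempty

/-- L-approximation space. -/
def IsLApprox {U : Type*} (R : U → U → Prop) (𝓕 : Set (Set U)) : Prop :=
  IsCFApprox R 𝓕 ∧
    ∀ M ∈ joinSat 𝓕 ∪ {(∅ : Set U)}, ∀ F ∈ 𝓕, M ⊆ upp R F → (SFam R 𝓕 M F).Nonempty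

/-- bc-approximation space. -/
def IsBCApprox {U : Type*} (R : U → U → Prop) (𝓕 : Set (Set U)) : Prop :=
  IsCFApprox R 𝓕 ∧
    ∀ M ∈ joinSat 𝓕 ∪ {(∅ : Set U)}, ∀ F ∈ 𝓕, M ⊆ upp R F →
      ∃ G ∈ 𝓕, upp R M ⊆ upp R G ∧ upp R G ⊆ upp R F ∧
        ∀ G' ∈ 𝓕, upp R M ⊆ upp R G' → upp R G ⊆ upp R G'

/-- A dcpo: every (nonempty) directed subset has a supremum. -/
def IsDcpo (P : Type*) [PartialOrder P] : Prop :=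
  ∀ D : Set P, D.Nonempty → DirectedOn (· ≤ ·) D → ∃ s, IsLUB D s

/-- The way-below relation `x ≪ y`. -/
def WayBelow {P : Type*} [PartialOrder P] (x y : P) : Prop :=
  ∀ D : Set P, D.Nonempty → DirectedOn (· ≤ ·) D →
    ∀ s, IsLUB D s → y ≤ s → ∃ d ∈ D, x ≤ d

/-- Continuous domain: a dcpo in which for every `x` the set `{z | z ≪ x}` is
directed with supremum `x`. -/
def IsContinuousDomain (P : Type*) [PartialOrder P] : Prop :=
  IsDcpo P ∧ ∀ x : P, {z | WayBelow z x}.Nonempty ∧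
    DirectedOn (· ≤ ·) {z | WayBelow z x} ∧ IsLUB {z | WayBelow z x} x

/-- Algebraic domain: a dcpo in which for every `x` the set `↓x ∩ K(P)` is
directed with supremum `x`. -/
def IsAlgebraicDomain (P : Type*) [PartialOrder P] : Prop :=
  IsDcpo P ∧ ∀ x : P, ({k | k ≤ x ∧ WayBelow k k}).Nonempty ∧
    DirectedOn (· ≤ ·) {k | k ≤ x ∧ WayBelow k k} ∧
    IsLUB {k | k ≤ x ∧ WayBelow k k} x

/-- sL-domain: a continuous domain in which every principal ideal is a
sup-semilattice. -/
def IsSLDomain (P : Type*) [PartialOrder P] : Prop :=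
  IsContinuousDomain P ∧ ∀ x a b : P, a ≤ x → b ≤ x →
    ∃ s, s ≤ x ∧ a ≤ s ∧ b ≤ s ∧ ∀ t, t ≤ x → a ≤ t → b ≤ t → s ≤ t

/-- L-domain: a continuous domain in which every principal ideal is a
complete lattice (every subset of `↓x` has a least upper bound in `↓x`). -/
def IsLDomain (P : Type*) [PartialOrder P] : Prop :=
  IsContinuousDomain P ∧ ∀ (x : P) (A : Set P), (∀ a ∈ A, a ≤ x) →
    ∃ s, s ≤ x ∧ (∀ a ∈ A, a ≤ s) ∧ ∀ t, t ≤ x → (∀ a ∈ A, a ≤ t) → s ≤ t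

/-- bc-domain: a continuous domain in which every up-bounded subset has a
supremum. -/
def IsBCDomain (P : Type*) [PartialOrder P] : Prop :=
  IsContinuousDomain P ∧ ∀ A : Set P, (∃ b, ∀ a ∈ A, a ≤ b) → ∃ s, IsLUB A s

/-!
CF-closed sets are closed under directed unions, so directed suprema are unions. For `F ∈ 𝓕`
with `F ⊆ E`, finiteness of `F` makes `upp R F` way below `E`, and these sets form a directed
family with union `E`. In the ideal below `X`, the supremum of a family with union `Y` is the union
of the sets `upp R G` with `G ∈ S(M, F)`, where `M ∈ 𝓕^♯ ∪ {∅}`, `M ⊆ Y` and `F ∈ 𝓕`, `F ⊆ X`: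
the L-condition makes `upp R G` the least `upp R H` above `upp R M` inside `X`, whatever `F` is,
and this gives both directedness and leastness.
-/

section

variable {U : Type*} {R : U → U → Prop} {𝓕 : Set (Set U)}

lemma upp_mono {A B : Set U} (h : A ⊆ B) : upp R A ⊆ upp R B :=
  fun _ ⟨y, hy, hxy⟩ => ⟨y, h hy, hxy⟩

lemma upp_subset_upp_of_subset_upp (hR : Transitive R) {A B : Set U} (h : A ⊆ upp R B) :
    upp R A ⊆ upp R B := by
  rintro x ⟨y, hy, hxy⟩
  obtain ⟨z, hz, hyz⟩ := h hy
  exact ⟨z, hz, hR hxy hyz⟩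

lemma CFClosed.upp_subset (hR : Transitive R) {E F : Set U} (hE : CFClosed R 𝓕 E)
    (hF : F.Finite) (hFE : F ⊆ E) : upp R F ⊆ E := by
  obtain ⟨H, -, hFH, hHE, -⟩ := hE F hF hFE
  exact (upp_subset_upp_of_subset_upp hR hFH).trans hHE

lemma cfClosed_upp (hCF : IsCFApprox R 𝓕) {F : Set U} (hF : F ∈ 𝓕) :
    CFClosed R 𝓕 (upp R F) := by
  intro K hK hKF
  obtain ⟨G, hG, hKG, hGF⟩ := hCF.2.2.2 F hF K hK hKF
  exact ⟨G, hG, hKG, upp_subset_upp_of_subset_upp hCF.1 hGF, hGF⟩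

lemma cfClosed_sUnion {D : Set (Set U)} (hne : D.Nonempty) (hdir : DirectedOn (· ⊆ ·) D)
    (hD : ∀ E ∈ D, CFClosed R 𝓕 E) : CFClosed R 𝓕 (⋃₀ D) := by
  intro K hK hKD
  obtain ⟨E, hED, hKE⟩ := hdir.exists_mem_subset_of_finite_of_subset_sUnion hne hK hKD
  obtain ⟨F, hF, hKF, hFE, hFE'⟩ := hD E hED K hK hKE
  exact ⟨F, hF, hKF, hFE.trans (subset_sUnion_of_mem hED),
    hFE'.trans (subset_sUnion_of_mem hED)⟩

section Order

variable {P : Type*} [PartialOrder P]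

lemma WayBelow.le {x y : P} (h : WayBelow x y) : x ≤ y := by
  obtain ⟨d, rfl, hxd⟩ :=
    h {y} (singleton_nonempty y) (directedOn_singleton _) y isLUB_singleton le_rfl
  exact hxd

/-- Every `z ≪ x` lies below a member of `B`. -/
lemma wayBelow_directed_isLUB_of_basis {x : P} {B : Set P} (hne : B.Nonempty)
    (hdir : DirectedOn (· ≤ ·) B) (hlub : IsLUB B x) (hB : ∀ b ∈ B, WayBelow b x) :
    {z | WayBelow z x}.Nonempty ∧ DirectedOn (· ≤ ·) {z | WayBelow z x} ∧
      IsLUB {z | WayBelow z x} x := by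
  have below_basis : ∀ z, WayBelow z x → ∃ b ∈ B, z ≤ b :=
    fun z hz => hz B hne hdir x hlub le_rfl
  refine ⟨hne.mono hB, fun z₁ hz₁ z₂ hz₂ => ?_, fun z hz => hz.le,
    fun t ht => hlub.2 fun b hb => ht (hB b hb)⟩
  obtain ⟨b₁, hb₁, hzb₁⟩ := below_basis z₁ hz₁
  obtain ⟨b₂, hb₂, hzb₂⟩ := below_basis z₂ hz₂
  obtain ⟨b, hb, hb₁b, hb₂b⟩ := hdir b₁ hb₁ b₂ hb₂
  exact ⟨b, hB b hb, hzb₁.trans hb₁b, hzb₂.trans hb₂b⟩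

end Order

section Continuity

lemma cfClosed_sUnion_val {D : Set {E : Set U // CFClosed R 𝓕 E}} (hne : D.Nonempty)
    (hdir : DirectedOn (· ≤ ·) D) : CFClosed R 𝓕 (⋃₀ (Subtype.val '' D)) :=
  cfClosed_sUnion (hne.image _) (directedOn_image.2 hdir) (by rintro _ ⟨d, -, rfl⟩; exact d.2)

lemma isLUB_sUnion_val {D : Set {E : Set U // CFClosed R 𝓕 E}} (hne : D.Nonempty)
    (hdir : DirectedOn (· ≤ ·) D) : IsLUB D ⟨_, cfClosed_sUnion_val hne hdir⟩ :=
  ⟨fun d hd => subset_sUnion_of_mem ⟨d, hd, rfl⟩,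
    fun _ ht => sUnion_subset (by rintro _ ⟨d, hd, rfl⟩; exact ht hd)⟩

lemma isDcpo_cfClosed : IsDcpo {E : Set U // CFClosed R 𝓕 E} :=
  fun _ hne hdir => ⟨_, isLUB_sUnion_val hne hdir⟩

lemma wayBelow_of_val_eq_upp (hCF : IsCFApprox R 𝓕) {E F : Set U} (hE : CFClosed R 𝓕 E)
    (hF : F ∈ 𝓕) (hFE : F ⊆ E) {z : {E : Set U // CFClosed R 𝓕 E}} (hz : z.val = upp R F) :
    WayBelow z ⟨E, hE⟩ := by
  intro D hne hdir s hs hEs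
  rw [hs.unique (isLUB_sUnion_val hne hdir)] at hEs
  obtain ⟨_, ⟨d, hd, rfl⟩, hFd⟩ :=
    (directedOn_image (f := Subtype.val).2 hdir).exists_mem_subset_of_finite_of_subset_sUnion
      (hne.image _) (hCF.2.2.1 F hF) (hFE.trans hEs)
  exact ⟨d, hd, show z.val ⊆ d.val from hz ▸ d.2.upp_subset hCF.1 (hCF.2.2.1 F hF) hFd⟩

lemma isContinuousDomain_cfClosed (hCF : IsCFApprox R 𝓕) :
    IsContinuousDomain {E : Set U // CFClosed R 𝓕 E} := by
  refine ⟨isDcpo_cfClosed, fun ⟨E, hE⟩ => ?_⟩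
  set B : Set {E : Set U // CFClosed R 𝓕 E} := {z | ∃ F ∈ 𝓕, F ⊆ E ∧ z.val = upp R F}
  have mem_B {F} (hF : F ∈ 𝓕) (hFE : F ⊆ E) :
      (⟨upp R F, cfClosed_upp hCF hF⟩ : {E : Set U // CFClosed R 𝓕 E}) ∈ B :=
    ⟨F, hF, hFE, rfl⟩
  refine wayBelow_directed_isLUB_of_basis (B := B) ?_ ?_ ⟨?_, fun t ht => ?_⟩
    (fun z ⟨F, hF, hFE, hz⟩ => wayBelow_of_val_eq_upp hCF hE hF hFE hz)
  · obtain ⟨F, hF, -, -, hFE⟩ := hE ∅ finite_empty (empty_subset E)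
    exact ⟨_, mem_B hF hFE⟩
  · rintro z₁ ⟨F₁, hF₁, hF₁E, hz₁⟩ z₂ ⟨F₂, hF₂, hF₂E, hz₂⟩
    obtain ⟨F, hF, hF₁₂F, -, hFE⟩ :=
      hE _ ((hCF.2.2.1 F₁ hF₁).union (hCF.2.2.1 F₂ hF₂)) (union_subset hF₁E hF₂E)
    refine ⟨_, mem_B hF hFE, ?_, ?_⟩
    · exact show z₁.val ⊆ _ from
        hz₁ ▸ upp_subset_upp_of_subset_upp hCF.1 (subset_union_left.trans hF₁₂F)
    · exact show z₂.val ⊆ _ from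
        hz₂ ▸ upp_subset_upp_of_subset_upp hCF.1 (subset_union_right.trans hF₁₂F)
  · rintro z ⟨F, hF, hFE, hz⟩
    exact show z.val ⊆ E from hz ▸ hE.upp_subset hCF.1 (hCF.2.2.1 F hF) hFE
  · intro x hx
    obtain ⟨F, hF, hxF, -, hFE⟩ := hE {x} (finite_singleton x) (singleton_subset_iff.2 hx)
    exact ht (mem_B hF hFE) (hxF rfl)

end Continuity

section LocalJoins

lemma mem_joinSat_union_empty_iff {M : Set U} :
    M ∈ joinSat 𝓕 ∪ {(∅ : Set U)} ↔ ∃ 𝓐 ⊆ 𝓕, 𝓐.Finite ∧ M = ⋃₀ 𝓐 := by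
  constructor
  · rintro (⟨𝓐, h𝓐, hfin, -, rfl⟩ | rfl)
    · exact ⟨𝓐, h𝓐, hfin, rfl⟩
    · exact ⟨∅, empty_subset _, finite_empty, sUnion_empty.symm⟩
  · rintro ⟨𝓐, h𝓐, hfin, rfl⟩
    rcases 𝓐.eq_empty_or_nonempty with rfl | hne
    · exact Or.inr sUnion_empty
    · exact Or.inl ⟨𝓐, h𝓐, hfin, hne, rfl⟩

lemma mem_joinSat_union_empty_of_mem {F : Set U} (hF : F ∈ 𝓕) :
    F ∈ joinSat 𝓕 ∪ {(∅ : Set U)} :=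
  mem_joinSat_union_empty_iff.2 ⟨{F}, singleton_subset_iff.2 hF, finite_singleton F,
    (sUnion_singleton F).symm⟩

lemma union_mem_joinSat_union_empty {M N : Set U} (hM : M ∈ joinSat 𝓕 ∪ {(∅ : Set U)})
    (hN : N ∈ joinSat 𝓕 ∪ {(∅ : Set U)}) : M ∪ N ∈ joinSat 𝓕 ∪ {(∅ : Set U)} := by
  obtain ⟨𝓐, h𝓐, h𝓐fin, rfl⟩ := mem_joinSat_union_empty_iff.1 hM
  obtain ⟨𝓑, h𝓑, h𝓑fin, rfl⟩ := mem_joinSat_union_empty_iff.1 hN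
  exact mem_joinSat_union_empty_iff.2
    ⟨𝓐 ∪ 𝓑, union_subset h𝓐 h𝓑, h𝓐fin.union h𝓑fin, (sUnion_union 𝓐 𝓑).symm⟩

lemma finite_of_mem_joinSat_union_empty (hfin : ∀ F ∈ 𝓕, F.Finite) {M : Set U}
    (hM : M ∈ joinSat 𝓕 ∪ {(∅ : Set U)}) : M.Finite := by
  obtain ⟨𝓐, h𝓐, h𝓐fin, rfl⟩ := mem_joinSat_union_empty_iff.1 hM
  exact h𝓐fin.sUnion fun F hF => hfin F (h𝓐 hF)

/-- Minimality of `G ∈ S(M, F)` is only stated relative to `F`; comparing `G` with a member of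
`S(M, F')` for a larger `F'` makes it minimal among all admissible `H` below `upp R F'`. -/
lemma upp_subset_of_mem_SFam (hL : IsLApprox R 𝓕) {M F F' G H : Set U}
    (hM : M ∈ joinSat 𝓕 ∪ {(∅ : Set U)}) (hMF : M ⊆ upp R F) (hG : G ∈ SFam R 𝓕 M F)
    (hF' : F' ∈ 𝓕) (hFF' : F ⊆ upp R F') (hH : H ∈ 𝓕) (hMH : upp R M ⊆ upp R H)
    (hHF' : upp R H ⊆ upp R F') : upp R G ⊆ upp R H := by
  have hFF'' := upp_subset_upp_of_subset_upp hL.1.1 hFF'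
  obtain ⟨G', hG'⟩ := hL.2 M hM F' hF' (hMF.trans hFF'')
  have hG'G : upp R G' ⊆ upp R G := hG'.2.2.2 G hG.1 hG.2.1 (hG.2.2.1.trans hFF'')
  have hGG' : upp R G ⊆ upp R G' := hG.2.2.2 G' hG'.1 hG'.2.1 (hG'G.trans hG.2.2.1)
  exact hGG'.trans (hG'.2.2.2 H hH hMH hHF')

/-- Its union is the supremum of `Y` in the principal ideal `↓X`. -/
def minimalUpps (R : U → U → Prop) (𝓕 : Set (Set U)) (X Y : Set U) : Set (Set U) :=
  {A | ∃ M ∈ joinSat 𝓕 ∪ {(∅ : Set U)}, M ⊆ Y ∧ ∃ F ∈ 𝓕, F ⊆ X ∧ M ⊆ upp R F ∧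
    ∃ G ∈ SFam R 𝓕 M F, A = upp R G}

variable {X Y : Set U}

lemma exists_mem_minimalUpps (hL : IsLApprox R 𝓕) (hX : CFClosed R 𝓕 X) (hYX : Y ⊆ X)
    {M : Set U} (hM : M ∈ joinSat 𝓕 ∪ {(∅ : Set U)}) (hMY : M ⊆ Y) {K : Set U}
    (hK : K.Finite) (hKX : K ⊆ X) :
    ∃ F ∈ 𝓕, K ⊆ upp R F ∧ ∃ G ∈ SFam R 𝓕 M F, upp R G ∈ minimalUpps R 𝓕 X Y := by
  obtain ⟨F, hF, hMKF, -, hFX⟩ :=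
    hX (M ∪ K) ((finite_of_mem_joinSat_union_empty hL.1.2.2.1 hM).union hK)
      (union_subset (hMY.trans hYX) hKX)
  have hMF : M ⊆ upp R F := subset_union_left.trans hMKF
  obtain ⟨G, hG⟩ := hL.2 M hM F hF hMF
  exact ⟨F, hF, subset_union_right.trans hMKF, G, hG, M, hM, hMY, F, hF, hFX, hMF, G, hG, rfl⟩

lemma directedOn_minimalUpps (hL : IsLApprox R 𝓕) (hX : CFClosed R 𝓕 X) (hYX : Y ⊆ X) :
    DirectedOn (· ⊆ ·) (minimalUpps R 𝓕 X Y) := by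
  have hfin := hL.1.2.2.1
  rintro _ ⟨M₁, hM₁, hM₁Y, F₁, hF₁, hF₁X, hM₁F₁, G₁, hG₁, rfl⟩
    _ ⟨M₂, hM₂, hM₂Y, F₂, hF₂, hF₂X, hM₂F₂, G₂, hG₂, rfl⟩
  obtain ⟨F, hF, hF₁₂F, G, hG, hGmem⟩ :=
    exists_mem_minimalUpps hL hX hYX (union_mem_joinSat_union_empty hM₁ hM₂)
      (union_subset hM₁Y hM₂Y) ((hfin F₁ hF₁).union (hfin F₂ hF₂)) (union_subset hF₁X hF₂X)
  exact ⟨_, hGmem,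
    upp_subset_of_mem_SFam hL hM₁ hM₁F₁ hG₁ hF (subset_union_left.trans hF₁₂F) hG.1
      ((upp_mono subset_union_left).trans hG.2.1) hG.2.2.1,
    upp_subset_of_mem_SFam hL hM₂ hM₂F₂ hG₂ hF (subset_union_right.trans hF₁₂F) hG.1
      ((upp_mono subset_union_right).trans hG.2.1) hG.2.2.1⟩

lemma cfClosed_sUnion_minimalUpps (hL : IsLApprox R 𝓕) (hX : CFClosed R 𝓕 X) (hYX : Y ⊆ X) :
    CFClosed R 𝓕 (⋃₀ minimalUpps R 𝓕 X Y) := by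
  obtain ⟨_, _, _, _, _, hGmem⟩ := exists_mem_minimalUpps hL hX hYX (Or.inr rfl)
    (empty_subset Y) finite_empty (empty_subset X)
  refine cfClosed_sUnion ⟨_, hGmem⟩ (directedOn_minimalUpps hL hX hYX) ?_
  rintro _ ⟨_, _, _, _, _, _, _, G, hG, rfl⟩
  exact cfClosed_upp hL.1 hG.1

lemma sUnion_minimalUpps_subset (hCF : IsCFApprox R 𝓕) (hX : CFClosed R 𝓕 X) :
    ⋃₀ minimalUpps R 𝓕 X Y ⊆ X := by
  rintro x ⟨_, ⟨_, _, _, F, hF, hFX, _, G, hG, rfl⟩, hxG⟩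
  exact hX.upp_subset hCF.1 (hCF.2.2.1 F hF) hFX (hG.2.2.1 hxG)

lemma subset_sUnion_minimalUpps (hL : IsLApprox R 𝓕) (hX : CFClosed R 𝓕 X) (hYX : Y ⊆ X)
    {A : Set U} (hA : CFClosed R 𝓕 A) (hAY : A ⊆ Y) : A ⊆ ⋃₀ minimalUpps R 𝓕 X Y := by
  intro x hx
  obtain ⟨F, hF, hxF, -, hFA⟩ := hA {x} (finite_singleton x) (singleton_subset_iff.2 hx)
  obtain ⟨_, _, _, G, hG, hGmem⟩ := exists_mem_minimalUpps hL hX hYX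
    (mem_joinSat_union_empty_of_mem hF) (hFA.trans hAY) finite_empty (empty_subset X)
  exact ⟨_, hGmem, hG.2.1 (hxF rfl)⟩

lemma sUnion_minimalUpps_subset_of_subset (hL : IsLApprox R 𝓕) (hX : CFClosed R 𝓕 X)
    {T : Set U} (hT : CFClosed R 𝓕 T) (hTX : T ⊆ X) (hYT : Y ⊆ T) :
    ⋃₀ minimalUpps R 𝓕 X Y ⊆ T := by
  have hR := hL.1.1
  have hfin := hL.1.2.2.1
  rintro x ⟨_, ⟨M, hM, hMY, F, hF, hFX, hMF, G, hG, rfl⟩, hxG⟩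
  obtain ⟨H, hH, hMH, hHT, hHT'⟩ :=
    hT M (finite_of_mem_joinSat_union_empty hfin hM) (hMY.trans hYT)
  obtain ⟨F', hF', hFHF', -, -⟩ :=
    hX (F ∪ H) ((hfin F hF).union (hfin H hH)) (union_subset hFX (hHT'.trans hTX))
  exact hHT (upp_subset_of_mem_SFam hL hM hMF hG hF' (subset_union_left.trans hFHF') hH
    (upp_subset_upp_of_subset_upp hR hMH)
    (upp_subset_upp_of_subset_upp hR (subset_union_right.trans hFHF')) hxG)

end LocalJoins

end

/-- if `(U, R, 𝓕)` is an L-approximation space, then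
`(𝔠(U, R, 𝓕), ⊆)` is an L-domain. -/
theorem stmt12 {U : Type*} (R : U → U → Prop) (𝓕 : Set (Set U))
    (hL : IsLApprox R 𝓕) :
    IsLDomain {E : Set U // CFClosed R 𝓕 E} := by
  refine ⟨isContinuousDomain_cfClosed hL.1, fun X A hA => ?_⟩
  have hYX : ⋃₀ (Subtype.val '' A) ⊆ X.val :=
    sUnion_subset (by rintro _ ⟨a, ha, rfl⟩; exact hA a ha)
  refine ⟨⟨_, cfClosed_sUnion_minimalUpps hL X.2 hYX⟩, sUnion_minimalUpps_subset hL.1 X.2,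
    fun a ha => ?_, fun T hTX hAT => ?_⟩
  · exact subset_sUnion_minimalUpps hL X.2 hYX a.2 (subset_sUnion_of_mem ⟨a, ha, rfl⟩)
  · exact sUnion_minimalUpps_subset_of_subset hL X.2 T.2 hTX
      (sUnion_subset (by rintro _ ⟨a, ha, rfl⟩; exact hAT a ha))
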